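/- (Theorem 3, case z = 1 and ω = 1.) For every j ∈ ℕ the family (P_C(m, j))_{m ∈ ℕ} is summable, and with W_j = ∑'_{m} P_C(m, j) one has W_0 = 1/(2 − φ₂), W_{i₀} = 2·i₀/(2 − φ₂), and for every integer k ≥ 2, W_{k·i₀} = 2·i₀·φ₂^{k−1}/((1 − s)(2 − φ₂)). -/

import Mathlib

/-!
`W = ∑' m, P_C(m, ·)` is the Green function of the killed walk: it is the minimal nonnegative
solution of `W = δ_{i₀} + K W`, where `K` moves mass half left, half right and multiplies it by
the survival factor. An explicit solution is `W j = 2 h j / ((2 - φ₂) c_C j)` (and `1 / (2 - φ₂)`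
at `0`), where `h` interpolates linearly between the heights `φ₂ ^ (k - 1)` at the barriers
`k i₀`; the quadratic equation for `φ₂` is exactly the equation at the barriers. Minimality gives
summability and `∑' ≤ W`; the defect `D = W - ∑'` is then a nonnegative solution of `D = K D`
with `c_C D` bounded, so `c_C D` is discretely convex, bounded, and vanishes at `0`, hence `D = 0`.
-/

/-- Player C's survival factor: 0 at the absorbing state 0, `1 - s` at the
multiple function barriers `k·i₀` with `k ≥ 2`, and 1 elsewhere (in particular
`cC s i₀ i₀ = 1`). -/
noncomputable def cC (s : ℝ) (i₀ : ℕ) (i : ℕ) : ℝ :=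
  if i = 0 then 0 else if i₀ ∣ i ∧ i ≠ i₀ then 1 - s else 1

/-- Player C's arrival probabilities: `PC p s i₀ m j` is the probability that
player C, starting at `i₀`, is at state `j` after `m` steps without absorption. -/
noncomputable def PC (p s : ℝ) (i₀ : ℕ) : ℕ → ℕ → ℝ
  | 0, j => if j = i₀ then 1 else 0
  | m + 1, 0 => (1 - p) * cC s i₀ 1 * PC p s i₀ m 1
  | m + 1, j + 1 =>
      p * cC s i₀ j * PC p s i₀ m j + (1 - p) * cC s i₀ (j + 2) * PC p s i₀ m (j + 2)

open Finset Set

noncomputable def walkStep (c : ℕ → ℝ) : (ℕ → ℝ) →ₗ[ℝ] ℕ → ℝ where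
  toFun f
    | 0 => c 1 * f 1 / 2
    | j + 1 => (c j * f j + c (j + 2) * f (j + 2)) / 2
  map_add' f g := by funext j; cases j <;> simp <;> ring
  map_smul' a f := by funext j; cases j <;> simp <;> ring

namespace walkStep

variable {c : ℕ → ℝ}

@[simp]
lemma apply_zero (f : ℕ → ℝ) : walkStep c f 0 = c 1 * f 1 / 2 := rfl

@[simp]
lemma apply_succ (f : ℕ → ℝ) (j : ℕ) :
    walkStep c f (j + 1) = (c j * f j + c (j + 2) * f (j + 2)) / 2 := rfl

lemma mono (hc : 0 ≤ c) : Monotone (walkStep c) := by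
  intro f g hfg j
  cases j with
  | zero => simp only [apply_zero]; gcongr; exacts [hc 1, hfg 1]
  | succ j => simp only [apply_succ]; gcongr <;> first | exact hc _ | exact hfg _

lemma hasSum {F : ℕ → ℕ → ℝ} {G : ℕ → ℝ} (h : ∀ j, HasSum (fun m ↦ F m j) (G j)) (j : ℕ) :
    HasSum (fun m ↦ walkStep c (F m) j) (walkStep c G j) := by
  cases j with
  | zero => exact ((h 1).mul_left _).div_const 2
  | succ j => exact (((h j).mul_left _).add ((h (j + 2)).mul_left _)).div_const 2

end walkStep

lemma antitone_of_bddAbove_of_two_mul_le {E : ℕ → ℝ} (hbdd : BddAbove (range E))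
    (hconv : ∀ j, 2 * E (j + 1) ≤ E j + E (j + 2)) : Antitone E := by
  obtain ⟨B, hB⟩ := hbdd
  have hB' : ∀ j, E j ≤ B := fun j ↦ hB ⟨j, rfl⟩
  have hΔ : Monotone fun j ↦ E (j + 1) - E j :=
    monotone_nat_of_le_succ fun j ↦ by linarith [hconv j]
  refine antitone_nat_of_succ_le fun j ↦ ?_
  by_contra! hlt
  set d := E (j + 1) - E j
  have hgrowth : ∀ n : ℕ, E j + n * d ≤ E (j + n) := by
    intro n
    induction n with
    | zero => simp
    | succ n ih =>
      have : d ≤ E (j + n + 1) - E (j + n) := hΔ (Nat.le_add_right j n)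
      push_cast
      rw [← add_assoc]
      linarith
  obtain ⟨n, hn⟩ := exists_nat_gt ((B - E j) / d)
  have := hgrowth n
  have := hB' (j + n)
  rw [div_lt_iff₀ (by linarith)] at hn
  linarith

section KilledWalk

variable {c : ℕ → ℝ} {P : ℕ → ℕ → ℝ} {W : ℕ → ℝ}

lemma eq_zero_of_walkStep_eq_self {D : ℕ → ℝ} (hc0 : c 0 = 0) (hcpos : ∀ j, 0 < c (j + 1))
    (hc1 : ∀ j, c j ≤ 1) (hD : 0 ≤ D) (hbdd : BddAbove (range (c * D)))
    (hDeq : walkStep c D = D) : D = 0 := by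
  have hc : 0 ≤ c := fun j ↦ by cases j <;> simp [hc0, (hcpos _).le]
  have hE : 0 ≤ c * D := mul_nonneg hc hD
  -- `c * D` is discretely convex because `c ≤ 1` and `D` is harmonic for the killed walk
  have hconv : ∀ j, 2 * (c * D) (j + 1) ≤ (c * D) j + (c * D) (j + 2) := by
    intro j
    have h := congrFun hDeq (j + 1)
    have := mul_le_of_le_one_left (hD (j + 1)) (hc1 (j + 1))
    simp only [walkStep.apply_succ, Pi.mul_apply] at h ⊢
    linarith
  have hE0 : c * D = 0 := by
    funext j
    have hle : (c * D) j ≤ (c * D) 0 := antitone_of_bddAbove_of_two_mul_le hbdd hconv j.zero_le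
    rw [Pi.mul_apply c D 0, hc0, zero_mul] at hle
    exact le_antisymm hle (hE j)
  funext j
  cases j with
  | zero => simpa [show c 1 * D 1 = 0 from congrFun hE0 1] using (congrFun hDeq 0).symm
  | succ j => simpa [(hcpos j).ne'] using congrFun hE0 (j + 1)

variable (hP : ∀ m, P (m + 1) = walkStep c (P m))
include hP

lemma nonneg_of_walkStep_succ (hc : 0 ≤ c) (hP0 : 0 ≤ P 0) (m : ℕ) : 0 ≤ P m := by
  induction m with
  | zero => exact hP0
  | succ m ih => simpa [hP] using walkStep.mono hc ih

lemma sum_range_le_of_walkStep_succ (hc : 0 ≤ c) (hW : 0 ≤ W)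
    (hsuper : P 0 + walkStep c W ≤ W) (M : ℕ) : ∑ m ∈ range M, P m ≤ W := by
  induction M with
  | zero => simpa using hW
  | succ M ih =>
    calc ∑ m ∈ range (M + 1), P m = P 0 + walkStep c (∑ m ∈ range M, P m) := by
          simp [sum_range_succ', hP, map_sum, add_comm]
      _ ≤ P 0 + walkStep c W := add_le_add_right (walkStep.mono hc ih) _
      _ ≤ W := hsuper

theorem hasSum_of_walkStep_succ (hc0 : c 0 = 0) (hcpos : ∀ j, 0 < c (j + 1))
    (hc1 : ∀ j, c j ≤ 1) (hP0 : 0 ≤ P 0) (hW : 0 ≤ W) (hbdd : BddAbove (range (c * W)))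
    (hWeq : P 0 + walkStep c W = W) (j : ℕ) : HasSum (fun m ↦ P m j) (W j) := by
  have hc : 0 ≤ c := fun j ↦ by cases j <;> simp [hc0, (hcpos _).le]
  have hPnn := nonneg_of_walkStep_succ hP hc hP0
  have hpartial (M j) : ∑ m ∈ range M, P m j ≤ W j := by
    simpa using sum_range_le_of_walkStep_succ hP hc hW hWeq.le M j
  have hsum (j) : Summable fun m ↦ P m j :=
    summable_of_sum_range_le (fun m ↦ hPnn m j) (hpartial · j)
  set T : ℕ → ℝ := fun j ↦ ∑' m, P m j
  have hTeq : P 0 + walkStep c T = T := by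
    funext j
    have hshift : HasSum (fun m ↦ P (m + 1) j) (walkStep c T j) := by
      simpa [hP] using walkStep.hasSum (fun j ↦ (hsum j).hasSum) j
    simp [T, (hsum j).tsum_eq_zero_add, hshift.tsum_eq]
  have hTW : T ≤ W := fun j ↦ (hsum j).tsum_le_of_sum_range_le (hpartial · j)
  have hT : 0 ≤ T := fun j ↦ tsum_nonneg (hPnn · j)
  have hDbdd : BddAbove (range (c * (W - T))) := by
    obtain ⟨B, hB⟩ := hbdd
    refine ⟨B, forall_mem_range.2 fun j ↦ le_trans ?_ (hB ⟨j, rfl⟩)⟩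
    simpa using mul_le_mul_of_nonneg_left (sub_le_self _ (hT j)) (hc j)
  have hD := eq_zero_of_walkStep_eq_self hc0 hcpos hc1 (sub_nonneg.2 hTW) hDbdd
    (by rw [map_sub, ← add_sub_add_left_eq_sub _ _ (P 0), hWeq, hTeq])
  rw [sub_eq_zero.1 hD]
  exact (hsum j).hasSum

end KilledWalk

section SurvivalFactor

variable {s : ℝ} {i₀ : ℕ}

lemma cC_zero : cC s i₀ 0 = 0 := if_pos rfl

lemma cC_pos (hs1 : s < 1) {i : ℕ} (hi : i ≠ 0) : 0 < cC s i₀ i := by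
  simp only [cC, hi, if_false]; split_ifs <;> linarith

lemma cC_le_one (hs : 0 ≤ s) (i : ℕ) : cC s i₀ i ≤ 1 := by
  unfold cC; split_ifs <;> linarith

lemma cC_self (hi₀ : i₀ ≠ 0) : cC s i₀ i₀ = 1 := by
  simp [cC, hi₀]

lemma cC_of_not_dvd {i : ℕ} (h : ¬ i₀ ∣ i) : cC s i₀ i = 1 := by
  have hi : i ≠ 0 := by rintro rfl; exact h (dvd_zero _)
  simp [cC, hi, h]

lemma cC_mul_self (hi₀ : i₀ ≠ 0) {k : ℕ} (hk : 2 ≤ k) : cC s i₀ (k * i₀) = 1 - s := by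
  have : k * i₀ ≠ i₀ := fun h ↦ by nlinarith [Nat.pos_of_ne_zero hi₀]
  have hk0 : k * i₀ ≠ 0 := by positivity
  simp [cC, hk0, this]

end SurvivalFactor

lemma PC_half_zero (s : ℝ) (i₀ : ℕ) : PC (1 / 2) s i₀ 0 = Pi.single i₀ 1 := by
  funext j
  simp [PC, Pi.single_apply]

lemma PC_half_succ (s : ℝ) (i₀ m : ℕ) :
    PC (1 / 2) s i₀ (m + 1) = walkStep (cC s i₀) (PC (1 / 2) s i₀ m) := by
  funext j
  cases j <;> simp [PC] <;> ring

noncomputable def barrierHeight (φ : ℝ) : ℕ → ℝ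
  | 0 => 0
  | k + 1 => φ ^ k

/-- `profile φ i₀` interpolates linearly between the values `barrierHeight φ k` at `k * i₀`.
It is harmonic off the barriers and has a kink of size `φ - 2` at the source `i₀`; the quadratic
equation for `φ` is what makes `2 h j = (1 - s) (h (j - 1) + h (j + 1))` hold at the barriers. -/
noncomputable def profile (φ : ℝ) (i₀ j : ℕ) : ℝ :=
  (i₀ - (j % i₀ : ℕ)) * barrierHeight φ (j / i₀) + (j % i₀ : ℕ) * barrierHeight φ (j / i₀ + 1)

section Profile

variable {s φ : ℝ} {i₀ : ℕ}

lemma barrierHeight_nonneg (hφ0 : 0 ≤ φ) (k : ℕ) : 0 ≤ barrierHeight φ k := by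
  cases k <;> simp [barrierHeight, pow_nonneg hφ0]

lemma barrierHeight_le_one (hφ0 : 0 ≤ φ) (hφ1 : φ ≤ 1) (k : ℕ) : barrierHeight φ k ≤ 1 := by
  cases k <;> simp [barrierHeight, pow_le_one₀ hφ0 hφ1]

lemma profile_block (hi₀ : i₀ ≠ 0) (k : ℕ) {r : ℕ} (hr : r ≤ i₀) :
    profile φ i₀ (k * i₀ + r) = (i₀ - r) * barrierHeight φ k + r * barrierHeight φ (k + 1) := by
  rcases hr.lt_or_eq with hr | rfl
  · have hdiv : (k * i₀ + r) / i₀ = k := by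
      rw [add_comm, Nat.add_mul_div_right _ _ (Nat.pos_of_ne_zero hi₀), Nat.div_eq_of_lt hr,
        zero_add]
    have hmod : (k * i₀ + r) % i₀ = r := by
      rw [add_comm, Nat.add_mul_mod_self_right, Nat.mod_eq_of_lt hr]
    rw [profile, hdiv, hmod]
  · rw [← Nat.succ_mul, profile, Nat.mul_div_cancel _ (Nat.pos_of_ne_zero hi₀), Nat.mul_mod_left]
    simp

lemma barrierHeight_of_ne_zero {k : ℕ} (hk : k ≠ 0) : barrierHeight φ k = φ ^ (k - 1) := by
  obtain ⟨k, rfl⟩ := Nat.exists_eq_succ_of_ne_zero hk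
  rfl

lemma profile_zero : profile φ i₀ 0 = 0 := by
  simp [profile, barrierHeight]

lemma profile_mul_self (hi₀ : i₀ ≠ 0) (k : ℕ) : profile φ i₀ (k * i₀) = i₀ * barrierHeight φ k := by
  simpa using profile_block (φ := φ) hi₀ k (Nat.zero_le i₀)

lemma profile_nonneg (hi₀ : i₀ ≠ 0) (hφ0 : 0 ≤ φ) (j : ℕ) : 0 ≤ profile φ i₀ j := by
  have hr : ((j % i₀ : ℕ) : ℝ) ≤ i₀ := by exact_mod_cast (Nat.mod_lt j (Nat.pos_of_ne_zero hi₀)).le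
  have := barrierHeight_nonneg hφ0 (j / i₀)
  have := barrierHeight_nonneg hφ0 (j / i₀ + 1)
  unfold profile
  positivity

lemma profile_le (hi₀ : i₀ ≠ 0) (hφ0 : 0 ≤ φ) (hφ1 : φ ≤ 1) (j : ℕ) : profile φ i₀ j ≤ i₀ := by
  have hr : ((j % i₀ : ℕ) : ℝ) ≤ i₀ := by exact_mod_cast (Nat.mod_lt j (Nat.pos_of_ne_zero hi₀)).le
  have := barrierHeight_le_one hφ0 hφ1 (j / i₀)
  have := barrierHeight_le_one hφ0 hφ1 (j / i₀ + 1)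
  unfold profile
  nlinarith [Nat.cast_nonneg (α := ℝ) (j % i₀)]

-- `hφ` is `φ ^ 2 - θ * φ + 1 = 0` multiplied by `1 - s`.
lemma cC_mul_profile_add_eq (hi₀ : i₀ ≠ 0)
    (hφ : (1 - s) * ((1 - φ) ^ 2 + 2 * i₀ * φ) = 2 * i₀ * φ) (n : ℕ) :
    cC s i₀ (n + 1) * (profile φ i₀ n + profile φ i₀ (n + 2) + if n + 1 = i₀ then 2 - φ else 0)
      = 2 * profile φ i₀ (n + 1) := by
  obtain ⟨k, r, hr, hn⟩ : ∃ k r, r < i₀ ∧ n + 1 = k * i₀ + r :=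
    ⟨(n + 1) / i₀, (n + 1) % i₀, Nat.mod_lt _ (Nat.pos_of_ne_zero hi₀), (Nat.div_add_mod' _ _).symm⟩
  rcases r with _ | t
  · obtain ⟨m, rfl⟩ : ∃ m, k = m + 1 := Nat.exists_eq_succ_of_ne_zero (by rintro rfl; omega)
    rw [Nat.succ_mul] at hn
    have hprev : profile φ i₀ n = 1 * barrierHeight φ m + (i₀ - 1) * barrierHeight φ (m + 1) := by
      rw [show n = m * i₀ + (i₀ - 1) by omega, profile_block hi₀ m (Nat.sub_le i₀ 1),
        Nat.cast_sub (Nat.one_le_iff_ne_zero.2 hi₀)]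
      ring
    have hnext : profile φ i₀ (n + 2)
        = (i₀ - 1) * barrierHeight φ (m + 1) + barrierHeight φ (m + 2) := by
      rw [show n + 2 = (m + 1) * i₀ + 1 by rw [Nat.succ_mul]; omega,
        profile_block hi₀ (m + 1) (Nat.one_le_iff_ne_zero.2 hi₀)]
      simp
    have hself : profile φ i₀ (n + 1) = i₀ * barrierHeight φ (m + 1) := by
      rw [show n + 1 = (m + 1) * i₀ by rw [Nat.succ_mul]; omega, profile_mul_self hi₀]
    rw [hprev, hnext, hself]
    rcases m with _ | m
    · rw [show n + 1 = i₀ by omega, cC_self hi₀, if_pos rfl]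
      simp [barrierHeight]
      ring
    · rw [show n + 1 = (m + 2) * i₀ by rw [hn]; ring,
        cC_mul_self hi₀ le_add_self, if_neg (by nlinarith [Nat.pos_of_ne_zero hi₀])]
      simp only [barrierHeight]
      linear_combination φ ^ m * hφ
  · have hmod : (n + 1) % i₀ = t + 1 := by
      rw [hn, add_comm, Nat.add_mul_mod_self_right, Nat.mod_eq_of_lt hr]
    have hndvd : ¬ i₀ ∣ n + 1 := by rw [Nat.dvd_iff_mod_eq_zero, hmod]; omega
    rw [cC_of_not_dvd hndvd, if_neg (by rintro rfl; exact hndvd dvd_rfl),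
      show n = k * i₀ + t by omega, show k * i₀ + t + 1 = k * i₀ + (t + 1) by ring,
      show k * i₀ + t + 2 = k * i₀ + (t + 2) by ring, profile_block hi₀ k (by omega),
      profile_block hi₀ k (by omega), profile_block hi₀ k (by omega)]
    push_cast
    ring

end Profile

-- The factor `2 / (2 - φ)` turns the kink `φ - 2` of `profile` at `i₀` into the unit source.
noncomputable def greenCandidate (s φ : ℝ) (i₀ j : ℕ) : ℝ :=
  if j = 0 then 1 / (2 - φ) else 2 * profile φ i₀ j / ((2 - φ) * cC s i₀ j)

section GreenCandidate

variable {s φ : ℝ} {i₀ : ℕ}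

lemma greenCandidate_zero : greenCandidate s φ i₀ 0 = 1 / (2 - φ) := if_pos rfl

lemma cC_mul_greenCandidate (hs1 : s < 1) (j : ℕ) :
    cC s i₀ j * greenCandidate s φ i₀ j = 2 * profile φ i₀ j / (2 - φ) := by
  rcases eq_or_ne j 0 with rfl | hj
  · simp [cC_zero, profile_zero]
  · have := (cC_pos (i₀ := i₀) hs1 hj).ne'
    rw [greenCandidate, if_neg hj]
    field_simp

lemma greenCandidate_nonneg (hs1 : s < 1) (hi₀ : i₀ ≠ 0) (hφ0 : 0 ≤ φ) (hφ1 : φ ≤ 1) :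
    0 ≤ greenCandidate s φ i₀ := by
  intro j
  have := profile_nonneg hi₀ hφ0 j
  have : 0 < 2 - φ := by linarith
  unfold greenCandidate
  split_ifs with hj
  · positivity
  · have := cC_pos (i₀ := i₀) hs1 hj
    positivity

lemma bddAbove_cC_mul_greenCandidate (hs1 : s < 1) (hi₀ : i₀ ≠ 0) (hφ0 : 0 ≤ φ) (hφ1 : φ ≤ 1) :
    BddAbove (range (cC s i₀ * greenCandidate s φ i₀)) := by
  refine ⟨2 * i₀ / (2 - φ), forall_mem_range.2 fun j ↦ ?_⟩
  rw [Pi.mul_apply, cC_mul_greenCandidate hs1]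
  gcongr
  · linarith
  · exact profile_le hi₀ hφ0 hφ1 j

lemma greenCandidate_eq_single_add_walkStep (hs1 : s < 1) (hi₀ : i₀ ≠ 0) (hφ2 : φ ≠ 2)
    (hφ : (1 - s) * ((1 - φ) ^ 2 + 2 * i₀ * φ) = 2 * i₀ * φ) :
    Pi.single i₀ 1 + walkStep (cC s i₀) (greenCandidate s φ i₀) = greenCandidate s φ i₀ := by
  have h2φ : 2 - φ ≠ 0 := sub_ne_zero.2 (Ne.symm hφ2)
  funext j
  cases j with
  | zero =>
    have hprofile1 : profile φ i₀ 1 = 1 := by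
      simpa [barrierHeight] using profile_block (φ := φ) hi₀ 0 (Nat.one_le_iff_ne_zero.2 hi₀)
    rw [Pi.add_apply, Pi.single_eq_of_ne (Ne.symm hi₀), walkStep.apply_zero,
      cC_mul_greenCandidate hs1, hprofile1, greenCandidate_zero]
    field_simp
    ring
  | succ n =>
    have hc := (cC_pos (i₀ := i₀) hs1 n.succ_ne_zero).ne'
    simp only [Pi.add_apply, Pi.single_apply, walkStep.apply_succ, cC_mul_greenCandidate hs1]
    rw [greenCandidate, if_neg n.succ_ne_zero, ← cC_mul_profile_add_eq hi₀ hφ n]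
    field_simp
    split_ifs <;> ring

lemma greenCandidate_mul_self (hi₀ : i₀ ≠ 0) {k : ℕ} (hk : k ≠ 0) :
    greenCandidate s φ i₀ (k * i₀) = 2 * i₀ * φ ^ (k - 1) / ((2 - φ) * cC s i₀ (k * i₀)) := by
  rw [greenCandidate, if_neg (mul_ne_zero hk hi₀), profile_mul_self hi₀,
    barrierHeight_of_ne_zero hk, mul_assoc]

end GreenCandidate

lemma hasSum_PC_half {s φ : ℝ} {i₀ : ℕ} (hs : 0 ≤ s) (hs1 : s < 1) (hi₀ : i₀ ≠ 0) (hφ0 : 0 ≤ φ)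
    (hφ1 : φ ≤ 1) (hφ : (1 - s) * ((1 - φ) ^ 2 + 2 * i₀ * φ) = 2 * i₀ * φ) (j : ℕ) :
    HasSum (fun m ↦ PC (1 / 2) s i₀ m j) (greenCandidate s φ i₀ j) := by
  refine hasSum_of_walkStep_succ (PC_half_succ s i₀) cC_zero (fun j ↦ cC_pos hs1 j.succ_ne_zero)
    (cC_le_one hs) ?_ (greenCandidate_nonneg hs1 hi₀ hφ0 hφ1)
    (bddAbove_cC_mul_greenCandidate hs1 hi₀ hφ0 hφ1) ?_ j
  · rw [PC_half_zero]
    exact Pi.single_nonneg.2 zero_le_one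
  · rw [PC_half_zero]
    exact greenCandidate_eq_single_add_walkStep hs1 hi₀ (by linarith) hφ

lemma smaller_root_spec {θ φ : ℝ} (hθ : 2 ≤ θ) (hφ : φ = (θ - √(θ ^ 2 - 4)) / 2) :
    0 ≤ φ ∧ φ ≤ 1 ∧ φ ^ 2 - θ * φ + 1 = 0 := by
  have hsq : √(θ ^ 2 - 4) ^ 2 = θ ^ 2 - 4 := Real.sq_sqrt (by nlinarith)
  have hsqrt_nonneg := Real.sqrt_nonneg (θ ^ 2 - 4)
  refine ⟨?_, ?_, ?_⟩
  · rw [hφ]; nlinarith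
  · rw [hφ]; nlinarith
  · rw [hφ]; linear_combination hsq / 4

/-- Theorem 3 of the paper, case `z = 1` and `ω = 1` (i.e. `p = q = 1/2`):
`W_j = ∑' m, P_C(m, j)` on the multiple function barriers. -/
theorem theorem3_case_z_eq_one_omega_eq_one (s : ℝ) (i₀ : ℕ)
    (hs : 0 < s) (hs1 : s < 1) (hi₀ : 2 ≤ i₀)
    (θ φ₂ : ℝ)
    (hθ : θ = 2 * ((i₀ : ℝ) / (1 - s) + 1 - (i₀ : ℝ)))
    (hφ₂ : φ₂ = (θ - Real.sqrt (θ ^ 2 - 4)) / 2) :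
    (∀ j : ℕ, Summable (fun m : ℕ => PC (1 / 2) s i₀ m j)) ∧
    (∑' m : ℕ, PC (1 / 2) s i₀ m 0) = 1 / (2 - φ₂) ∧
    (∑' m : ℕ, PC (1 / 2) s i₀ m i₀) = 2 * (i₀ : ℝ) / (2 - φ₂) ∧
    ∀ k : ℕ, 2 ≤ k →
      (∑' m : ℕ, PC (1 / 2) s i₀ m (k * i₀)) =
        2 * (i₀ : ℝ) * φ₂ ^ (k - 1) / ((1 - s) * (2 - φ₂)) := by
  have hi₀0 : i₀ ≠ 0 := by omega
  have h1s : 0 < 1 - s := by linarith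
  have hi₀_le : (i₀ : ℝ) ≤ i₀ / (1 - s) := le_div_self (Nat.cast_nonneg _) h1s (by linarith)
  obtain ⟨hφ0, hφ1, hroot⟩ := smaller_root_spec (by rw [hθ]; linarith) hφ₂
  have hφ : (1 - s) * ((1 - φ₂) ^ 2 + 2 * i₀ * φ₂) = 2 * i₀ * φ₂ := by
    rw [hθ] at hroot
    field_simp at hroot
    linear_combination hroot
  have hW := hasSum_PC_half hs.le hs1 hi₀0 hφ0 hφ1 hφ
  refine ⟨fun j ↦ (hW j).summable, ?_, ?_, fun k hk ↦ ?_⟩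
  · rw [(hW 0).tsum_eq, greenCandidate_zero]
  · have := greenCandidate_mul_self (s := s) (φ := φ₂) hi₀0 one_ne_zero
    rw [one_mul, cC_self hi₀0] at this
    rw [(hW i₀).tsum_eq, this]
    ring
  · rw [(hW _).tsum_eq, greenCandidate_mul_self hi₀0 (by omega), cC_mul_self hi₀0 hk,
      mul_comm (2 - φ₂)]
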